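/- arXiv:1303.3513 — 2 statements merged into one kernel-verified Lean document; each statement's English description precedes it below -/
import Mathlib

section
/- Let 1 < p < ∞, p ≠ 2, and r ≥ n. If τ : ℓ_p^n → ℓ_p^r is an isometry, then for every pair of distinct indices j ≠ k, the j-th and k-th columns of τ have disjoint supports. -/
open Finset

/-- The ℓ_q norm of a finite complex sequence. -/
noncomputable def lpNorm (q : ℝ) {m : ℕ} (x : Fin m → ℂ) : ℝ :=
  (∑ i, ‖x i‖ ^ q) ^ (1 / q)

open Set

/-! By the parallelogram law, `‖a + b‖² + ‖a - b‖² = 2 (‖a‖² + ‖b‖²)`; composing with the strictly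
concave (`p < 2`) or strictly convex (`p > 2`) map `t ↦ t ^ (p / 2)`, which vanishes at `0`, shows
that `‖a + b‖ ^ p + ‖a - b‖ ^ p - 2 (‖a‖ ^ p + ‖b‖ ^ p)` has the sign of `p - 2`, strictly unless
`a = 0` or `b = 0`. Testing the isometry on `e_j`, `e_k` and `e_j ± e_k` shows that these defects,
taken on the entries of columns `j` and `k`, sum to zero over the rows, so each one vanishes. -/

lemma StrictConcaveOn.map_add_lt_add {g : ℝ → ℝ} (hg : StrictConcaveOn ℝ (Ici 0) g)
    (hg0 : g 0 = 0) {x y : ℝ} (hx : 0 < x) (hy : 0 < y) : g (x + y) < g x + g y := by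
  have hxy : 0 < x + y := add_pos hx hy
  -- `z` is a strict convex combination of `x + y` and `0`
  have hcomb : ∀ z, 0 < z → z < x + y → z / (x + y) * g (x + y) < g z := by
    intro z hz hzxy
    have := hg.2 (mem_Ici.2 hxy.le) (mem_Ici.2 le_rfl) hxy.ne' (div_pos hz hxy)
      (by rwa [sub_pos, div_lt_one hxy]) (add_sub_cancel _ _)
    simpa [hg0, div_mul_cancel₀ _ hxy.ne'] using this
  have hsplit : x / (x + y) * g (x + y) + y / (x + y) * g (x + y) = g (x + y) := by
    field_simp
  linarith [hcomb x hx (by linarith), hcomb y hy (by linarith)]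

lemma StrictConcaveOn.map_norm_add_sq_add_map_norm_sub_sq_lt {E : Type*}
    [NormedAddCommGroup E] [InnerProductSpace ℝ E] {g : ℝ → ℝ}
    (hg : StrictConcaveOn ℝ (Ici 0) g) (hg0 : g 0 = 0) {a b : E} (ha : a ≠ 0) (hb : b ≠ 0) :
    g (‖a + b‖ ^ 2) + g (‖a - b‖ ^ 2) < 2 * (g (‖a‖ ^ 2) + g (‖b‖ ^ 2)) := by
  have hmid := hg.concaveOn.2 (mem_Ici.2 (sq_nonneg ‖a + b‖)) (mem_Ici.2 (sq_nonneg ‖a - b‖))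
    (by norm_num : (0 : ℝ) ≤ 1 / 2) (by norm_num : (0 : ℝ) ≤ 1 / 2) (by norm_num)
  have hmean : (1 / 2 : ℝ) • ‖a + b‖ ^ 2 + (1 / 2 : ℝ) • ‖a - b‖ ^ 2 = ‖a‖ ^ 2 + ‖b‖ ^ 2 := by
    simp only [smul_eq_mul]
    linarith [parallelogram_law_with_norm ℝ a b]
  rw [hmean, smul_eq_mul, smul_eq_mul] at hmid
  have hsubadd :=
    hg.map_add_lt_add hg0 (pow_pos (norm_pos_iff.2 ha) 2) (pow_pos (norm_pos_iff.2 hb) 2)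
  linarith

section ClarksonDefect

variable {E : Type*} [NormedAddCommGroup E]

noncomputable def clarksonDefect (p : ℝ) (a b : E) : ℝ :=
  ‖a + b‖ ^ p + ‖a - b‖ ^ p - 2 * (‖a‖ ^ p + ‖b‖ ^ p)

lemma norm_rpow_eq_sq_rpow (x : E) (p : ℝ) : ‖x‖ ^ p = (‖x‖ ^ 2) ^ (p / 2) := by
  rw [← Real.rpow_natCast, ← Real.rpow_mul (norm_nonneg x)]
  ring_nf

variable [InnerProductSpace ℝ E] {p : ℝ}

lemma mul_clarksonDefect_pos (hp : 0 < p) (hp2 : p ≠ 2) {a b : E} (ha : a ≠ 0) (hb : b ≠ 0) :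
    0 < (p - 2) * clarksonDefect p a b := by
  simp only [clarksonDefect, norm_rpow_eq_sq_rpow _ p]
  rcases hp2.lt_or_gt with hlt | hgt
  · have hg : StrictConcaveOn ℝ (Ici 0) fun t : ℝ ↦ t ^ (p / 2) :=
      Real.strictConcaveOn_rpow (by positivity) (by linarith)
    have := hg.map_norm_add_sq_add_map_norm_sub_sq_lt (Real.zero_rpow (by positivity)) ha hb
    exact mul_pos_of_neg_of_neg (by linarith) (by linarith)
  · have hg : StrictConcaveOn ℝ (Ici 0) fun t : ℝ ↦ -t ^ (p / 2) :=
      (strictConvexOn_rpow (by linarith)).neg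
    have := hg.map_norm_add_sq_add_map_norm_sub_sq_lt (by simp [Real.zero_rpow, hp.ne']) ha hb
    exact mul_pos (by linarith) (by linarith)

lemma mul_clarksonDefect_nonneg (hp : 0 < p) (a b : E) : 0 ≤ (p - 2) * clarksonDefect p a b := by
  rcases eq_or_ne p 2 with rfl | hp2
  · simp
  rcases eq_or_ne a 0 with rfl | ha
  · simp [clarksonDefect, Real.zero_rpow hp.ne', two_mul]
  rcases eq_or_ne b 0 with rfl | hb
  · simp [clarksonDefect, Real.zero_rpow hp.ne', two_mul]
  exact (mul_clarksonDefect_pos hp hp2 ha hb).le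

end ClarksonDefect

lemma sum_norm_rpow_single_add_single {E ι : Type*} [NormedAddCommGroup E] [Fintype ι]
    [DecidableEq ι] {p : ℝ} (hp : p ≠ 0) {j k : ι} (hjk : j ≠ k) (a b : E) :
    ∑ i, ‖(Pi.single j a + Pi.single k b : ι → E) i‖ ^ p = ‖a‖ ^ p + ‖b‖ ^ p := by
  rw [Fintype.sum_eq_add j k hjk fun i hi => by simp [hi.1, hi.2, Real.zero_rpow hp]]
  simp [hjk, hjk.symm]

lemma lpNorm_eq_lpNorm_iff {p : ℝ} (hp : p ≠ 0) {m m' : ℕ} {x : Fin m → ℂ} {y : Fin m' → ℂ} :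
    lpNorm p x = lpNorm p y ↔ ∑ i, ‖x i‖ ^ p = ∑ i, ‖y i‖ ^ p :=
  Real.rpow_left_inj (sum_nonneg fun _ _ => by positivity) (sum_nonneg fun _ _ => by positivity)
    (one_div_ne_zero hp)

section Isometry

variable {p : ℝ} {n r : ℕ} {τ : Matrix (Fin r) (Fin n) ℂ}

lemma sum_norm_rpow_col_add_mul_col (hp : p ≠ 0)
    (hiso : ∀ x : Fin n → ℂ, lpNorm p (τ.mulVec x) = lpNorm p x) {j k : Fin n} (hjk : j ≠ k)
    (c : ℂ) : ∑ i, ‖τ i j + c * τ i k‖ ^ p = 1 + ‖c‖ ^ p := by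
  have := (lpNorm_eq_lpNorm_iff hp).1 (hiso (Pi.single j 1 + Pi.single k c))
  rw [sum_norm_rpow_single_add_single hp hjk] at this
  simpa [Matrix.mulVec_add] using this

lemma sum_clarksonDefect_cols_eq_zero (hp : p ≠ 0)
    (hiso : ∀ x : Fin n → ℂ, lpNorm p (τ.mulVec x) = lpNorm p x) {j k : Fin n} (hjk : j ≠ k) :
    ∑ i, clarksonDefect p (τ i j) (τ i k) = 0 := by
  have hcol_j := sum_norm_rpow_col_add_mul_col hp hiso hjk 0
  have hcol_k := sum_norm_rpow_col_add_mul_col hp hiso hjk.symm 0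
  have hadd := sum_norm_rpow_col_add_mul_col hp hiso hjk 1
  have hsub := sum_norm_rpow_col_add_mul_col hp hiso hjk (-1)
  simp only [zero_mul, add_zero, norm_zero, Real.zero_rpow hp, one_mul, neg_one_mul, norm_neg,
    norm_one, Real.one_rpow, ← sub_eq_add_neg] at hcol_j hcol_k hadd hsub
  simp only [clarksonDefect, sum_sub_distrib, sum_add_distrib, ← mul_sum, hcol_j, hcol_k, hadd,
    hsub]
  norm_num

end Isometry

theorem isometry_columns_disjoint_general (p : ℝ) (hp : 1 < p) (hp2 : p ≠ 2)
    (n r : ℕ) (τ : Matrix (Fin r) (Fin n) ℂ)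
    (hiso : ∀ x : Fin n → ℂ, lpNorm p (τ.mulVec x) = lpNorm p x) :
    ∀ j k : Fin n, j ≠ k → ∀ i : Fin r, τ i j = 0 ∨ τ i k = 0 := by
  intro j k hjk i
  have hp0 : 0 < p := by linarith
  have hsum : ∑ i, (p - 2) * clarksonDefect p (τ i j) (τ i k) = 0 := by
    rw [← mul_sum, sum_clarksonDefect_cols_eq_zero hp0.ne' hiso hjk, mul_zero]
  have hzero := (sum_eq_zero_iff_of_nonneg fun i _ => mul_clarksonDefect_nonneg hp0 _ _).1 hsum i
    (mem_univ i)
  by_contra! h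
  exact (mul_clarksonDefect_pos hp0 hp2 h.1 h.2).ne' hzero

/-- If `1 < p < ∞`, `p ≠ 2`, `r ≥ n`, and `τ : ℓ_p^n → ℓ_p^r` is an isometry, then
distinct columns of `τ` have disjoint supports. -/
theorem isometry_columns_disjoint (p : ℝ) (hp : 1 < p) (hp2 : p ≠ 2)
    (n r : ℕ) (hnr : n ≤ r) (τ : Matrix (Fin r) (Fin n) ℂ)
    (hiso : ∀ x : Fin n → ℂ, lpNorm p (τ.mulVec x) = lpNorm p x) :
    ∀ j k : Fin n, j ≠ k → ∀ i : Fin r, τ i j = 0 ∨ τ i k = 0 :=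
  isometry_columns_disjoint_general p hp hp2 n r τ hiso
end

section
/- Let V be a p-operator space, n ∈ ℕ, and ‖·‖_{1,n} on M_n(V) as defined by the infimum over factorizations v = α w β of ‖α‖_{p'}‖w‖‖β‖_p. Then for all v ∈ M_n(V), ‖v‖_{M_n(V)} ≤ n^{2|1/p - 1/p'|} · ‖v‖_{1,n}. In particular, ‖v‖_{1,n} = 0 implies v = 0, so ‖·‖_{1,n} is a norm. -/
/-! By `M_p`, `‖α w β‖ ≤ ‖α‖_{B(ℓ_p)} ‖w‖ ‖β‖_{B(ℓ_p)}`, so it suffices to compare these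
operator norms with entrywise norms. For `α`, Hölder's inequality bounds each coordinate of
`α x` by the `ℓ_{p'}` norm of a row of `α` times `‖x‖_p`, and passing from the `ℓ_p` to the
`ℓ_{p'}` norm of the vector of row norms costs `n^{|1/p - 1/p'|}`. For `β`, the same factor
appears when `‖x‖_{p'}` is bounded by `‖x‖_p`. Taking the infimum over factorizations gives
the bound, and definiteness of `‖·‖_{M_n(V)}` gives the second claim. -/

open Finset Matrix

/-- The operator norm of a matrix viewed as a map `ℓ_q^b → ℓ_q^a`. -/
noncomputable def opNorm (q : ℝ) {a b : ℕ} (A : Matrix (Fin a) (Fin b) ℂ) : ℝ :=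
  sSup {c | ∃ x : Fin b → ℂ, lpNorm q x ≤ 1 ∧ c = lpNorm q (A.mulVec x)}

/-- The entrywise ℓ_q norm of a matrix. -/
noncomputable def eNorm (q : ℝ) {a b : ℕ} (A : Matrix (Fin a) (Fin b) ℂ) : ℝ :=
  (∑ i, ∑ j, ‖A i j‖ ^ q) ^ (1 / q)

variable {V : Type*} [NormedAddCommGroup V] [NormedSpace ℂ V]

/-- The product `α w β` of scalar matrices `α ∈ M_{n,r}(ℂ)`, `β ∈ M_{r,n}(ℂ)` with a
matrix `w ∈ M_r(V)` over a vector space `V`. -/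
def act {n r : ℕ} (α : Matrix (Fin n) (Fin r) ℂ) (w : Matrix (Fin r) (Fin r) V)
    (β : Matrix (Fin r) (Fin n) ℂ) : Matrix (Fin n) (Fin n) V :=
  fun i j => ∑ k, ∑ l, (α i k * β l j) • w k l

/-- The block-diagonal direct sum `v₁ ⊕ v₂ ∈ M_{n+m}(V)`. -/
def blockDiag {n m : ℕ} (v₁ : Matrix (Fin n) (Fin n) V) (v₂ : Matrix (Fin m) (Fin m) V) :
    Matrix (Fin (n + m)) (Fin (n + m)) V :=
  Matrix.reindex finSumFinEquiv finSumFinEquiv (Matrix.fromBlocks v₁ 0 0 v₂)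

/-- An (abstract) p-operator space structure on a complex Banach space `V`: a sequence of
norms on the matrix spaces `M_r(V)` satisfying the axioms `D_∞` and `M_p`. -/
structure POpSpace (p : ℝ) (V : Type*) [NormedAddCommGroup V] [NormedSpace ℂ V] where
  /-- the norm on `M_r(V)` -/
  N : ∀ r : ℕ, Matrix (Fin r) (Fin r) V → ℝ
  nonneg : ∀ r w, 0 ≤ N r w
  add_le : ∀ r u w, N r (u + w) ≤ N r u + N r w
  eq_zero_iff : ∀ r w, N r w = 0 ↔ w = 0
  smul_eq : ∀ r (c : ℂ) w, N r (c • w) = ‖c‖ * N r w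
  Dinf : ∀ (n m : ℕ) (v₁ : Matrix (Fin n) (Fin n) V) (v₂ : Matrix (Fin m) (Fin m) V),
    N (n + m) (blockDiag v₁ v₂) = max (N n v₁) (N m v₂)
  Mp : ∀ (n r : ℕ) (α : Matrix (Fin n) (Fin r) ℂ) (w : Matrix (Fin r) (Fin r) V)
    (β : Matrix (Fin r) (Fin n) ℂ), N n (act α w β) ≤ opNorm p α * N r w * opNorm p β

/-- The quantity `‖v‖_{1,n}` on `M_n(V)`: the infimum of `‖α‖_{p'} ‖w‖ ‖β‖_p` over all
factorizations `v = α w β`. -/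
noncomputable def norm1 {p : ℝ} (p' : ℝ) (S : POpSpace p V) (n : ℕ)
    (v : Matrix (Fin n) (Fin n) V) : ℝ :=
  sInf {c | ∃ (r : ℕ) (α : Matrix (Fin n) (Fin r) ℂ) (w : Matrix (Fin r) (Fin r) V)
      (β : Matrix (Fin r) (Fin n) ℂ),
      v = act α w β ∧ c = eNorm p' α * S.N r w * eNorm p β}

section FiniteSums

variable {ι : Type*} (s : Finset ι)

theorem sum_rpow_le_rpow_sum_of_nonneg {q : ℝ} (hq : 1 ≤ q) {a : ι → ℝ}
    (ha : ∀ i ∈ s, 0 ≤ a i) : ∑ i ∈ s, a i ^ q ≤ (∑ i ∈ s, a i) ^ q := by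
  classical
  induction s using Finset.induction_on with
  | empty => simp [Real.zero_rpow (by positivity : q ≠ 0)]
  | insert j s hj ih =>
    have ha' : ∀ i ∈ s, 0 ≤ a i := fun i hi => ha i (mem_insert_of_mem hi)
    rw [sum_insert hj, sum_insert hj]
    calc a j ^ q + ∑ i ∈ s, a i ^ q ≤ a j ^ q + (∑ i ∈ s, a i) ^ q := by gcongr; exact ih ha'
      _ ≤ (a j + ∑ i ∈ s, a i) ^ q :=
        Real.add_rpow_le_rpow_add (ha j (mem_insert_self j s)) (sum_nonneg ha') hq

theorem Lp_le_Lq_of_le_of_nonneg {p q : ℝ} (hq : 0 < q) (hqp : q ≤ p) {a : ι → ℝ}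
    (ha : ∀ i ∈ s, 0 ≤ a i) :
    (∑ i ∈ s, a i ^ p) ^ (1 / p) ≤ (∑ i ∈ s, a i ^ q) ^ (1 / q) := by
  have hp : 0 < p := hq.trans_le hqp
  have hsum : ∑ i ∈ s, a i ^ p ≤ (∑ i ∈ s, a i ^ q) ^ (p / q) := by
    calc ∑ i ∈ s, a i ^ p = ∑ i ∈ s, (a i ^ q) ^ (p / q) := by
          refine sum_congr rfl fun i hi => ?_
          rw [← Real.rpow_mul (ha i hi), mul_div_cancel₀ _ hq.ne']
      _ ≤ (∑ i ∈ s, a i ^ q) ^ (p / q) :=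
          sum_rpow_le_rpow_sum_of_nonneg s ((one_le_div hq).2 hqp)
            fun i hi => Real.rpow_nonneg (ha i hi) _
  calc (∑ i ∈ s, a i ^ p) ^ (1 / p) ≤ ((∑ i ∈ s, a i ^ q) ^ (p / q)) ^ (1 / p) := by
        gcongr
        exact sum_nonneg fun i hi => Real.rpow_nonneg (ha i hi) _
    _ = (∑ i ∈ s, a i ^ q) ^ (1 / q) := by
        rw [← Real.rpow_mul (sum_nonneg fun i hi => Real.rpow_nonneg (ha i hi) _)]
        field_simp

theorem Lp_le_card_rpow_mul_Lq_of_nonneg {p q : ℝ} (hp : 0 < p) (hpq : p ≤ q) {a : ι → ℝ}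
    (ha : ∀ i ∈ s, 0 ≤ a i) :
    (∑ i ∈ s, a i ^ p) ^ (1 / p) ≤ (#s : ℝ) ^ (1 / p - 1 / q) * (∑ i ∈ s, a i ^ q) ^ (1 / q) := by
  have hq : 0 < q := hp.trans_le hpq
  have hSp : 0 ≤ ∑ i ∈ s, a i ^ p := sum_nonneg fun i hi => Real.rpow_nonneg (ha i hi) _
  have hSq : 0 ≤ ∑ i ∈ s, a i ^ q := sum_nonneg fun i hi => Real.rpow_nonneg (ha i hi) _
  have hpow : (∑ i ∈ s, a i ^ p) ^ (q / p) ≤ (#s : ℝ) ^ (q / p - 1) * ∑ i ∈ s, a i ^ q := by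
    have h := Real.rpow_sum_le_const_mul_sum_rpow_of_nonneg s ((one_le_div hp).2 hpq)
      fun i hi => Real.rpow_nonneg (ha i hi) p
    convert h using 3 with i hi
    rw [← Real.rpow_mul (ha i hi), mul_div_cancel₀ _ hp.ne']
  calc (∑ i ∈ s, a i ^ p) ^ (1 / p) = ((∑ i ∈ s, a i ^ p) ^ (q / p)) ^ (1 / q) := by
        rw [← Real.rpow_mul hSp]
        field_simp
    _ ≤ ((#s : ℝ) ^ (q / p - 1) * ∑ i ∈ s, a i ^ q) ^ (1 / q) := by gcongr
    _ = (#s : ℝ) ^ (1 / p - 1 / q) * (∑ i ∈ s, a i ^ q) ^ (1 / q) := by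
        rw [Real.mul_rpow (by positivity) hSq, ← Real.rpow_mul (by positivity)]
        congr 2
        field_simp

theorem Lp_le_card_rpow_abs_mul_Lq_of_nonneg {p q : ℝ} (hp : 0 < p) (hq : 0 < q) {a : ι → ℝ}
    (ha : ∀ i ∈ s, 0 ≤ a i) :
    (∑ i ∈ s, a i ^ p) ^ (1 / p) ≤ (#s : ℝ) ^ |1 / p - 1 / q| * (∑ i ∈ s, a i ^ q) ^ (1 / q) := by
  rcases le_total p q with hpq | hqp
  · rw [abs_of_nonneg (sub_nonneg.2 (one_div_le_one_div_of_le hp hpq))]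
    exact Lp_le_card_rpow_mul_Lq_of_nonneg s hp hpq ha
  · rcases s.eq_empty_or_nonempty with rfl | hs
    · simp [Real.zero_rpow (inv_pos.2 hp).ne', Real.zero_rpow (inv_pos.2 hq).ne']
    have hcard : (1 : ℝ) ≤ #s := by exact_mod_cast hs.card_pos
    calc (∑ i ∈ s, a i ^ p) ^ (1 / p) ≤ (∑ i ∈ s, a i ^ q) ^ (1 / q) :=
          Lp_le_Lq_of_le_of_nonneg s hq hqp ha
      _ ≤ (#s : ℝ) ^ |1 / p - 1 / q| * (∑ i ∈ s, a i ^ q) ^ (1 / q) :=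
          le_mul_of_one_le_left
            (Real.rpow_nonneg (sum_nonneg fun i hi => Real.rpow_nonneg (ha i hi) _) _)
            (Real.one_le_rpow hcard (abs_nonneg _))

end FiniteSums

section MatrixNorms

variable {m a b : ℕ}

theorem lpNorm_nonneg (q : ℝ) (x : Fin m → ℂ) : 0 ≤ lpNorm q x :=
  Real.rpow_nonneg (sum_nonneg fun _ _ => Real.rpow_nonneg (norm_nonneg _) _) _

theorem lpNorm_rpow {q : ℝ} (hq : q ≠ 0) (x : Fin m → ℂ) : lpNorm q x ^ q = ∑ i, ‖x i‖ ^ q := by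
  rw [lpNorm, ← Real.rpow_mul (sum_nonneg fun _ _ => Real.rpow_nonneg (norm_nonneg _) _),
    one_div_mul_cancel hq, Real.rpow_one]

theorem eNorm_eq_lpNorm_rows {q : ℝ} (hq : q ≠ 0) (A : Matrix (Fin a) (Fin b) ℂ) :
    eNorm q A = (∑ i, lpNorm q (A i) ^ q) ^ (1 / q) := by
  simp only [eNorm, lpNorm_rpow hq]

theorem eNorm_nonneg (q : ℝ) (A : Matrix (Fin a) (Fin b) ℂ) : 0 ≤ eNorm q A :=
  Real.rpow_nonneg
    (sum_nonneg fun _ _ => sum_nonneg fun _ _ => Real.rpow_nonneg (norm_nonneg _) _) _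

theorem opNorm_nonneg (q : ℝ) (A : Matrix (Fin a) (Fin b) ℂ) : 0 ≤ opNorm q A :=
  Real.sSup_nonneg <| by
    rintro _ ⟨x, -, rfl⟩
    exact lpNorm_nonneg q _

theorem opNorm_le_of_lpNorm_mulVec_le {q C : ℝ} (hC : 0 ≤ C) {A : Matrix (Fin a) (Fin b) ℂ}
    (h : ∀ x, lpNorm q (A *ᵥ x) ≤ C * lpNorm q x) : opNorm q A ≤ C := by
  refine Real.sSup_le ?_ hC
  rintro _ ⟨x, hx, rfl⟩
  exact (h x).trans (mul_le_of_le_one_right hC hx)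

theorem lpNorm_le_card_rpow_mul_lpNorm {p q : ℝ} (hp : 0 < p) (hq : 0 < q) (x : Fin m → ℂ) :
    lpNorm p x ≤ (m : ℝ) ^ |1 / p - 1 / q| * lpNorm q x := by
  simpa [lpNorm] using Lp_le_card_rpow_abs_mul_Lq_of_nonneg univ hp hq (a := fun i => ‖x i‖)
    fun _ _ => norm_nonneg _

theorem lpNorm_le_of_norm_le_mul {q t : ℝ} (hq : 0 < q) (ht : 0 ≤ t) {y : Fin m → ℂ}
    {c : Fin m → ℝ} (hc : ∀ i, 0 ≤ c i) (h : ∀ i, ‖y i‖ ≤ c i * t) :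
    lpNorm q y ≤ (∑ i, c i ^ q) ^ (1 / q) * t := by
  calc lpNorm q y ≤ (∑ i, (c i * t) ^ q) ^ (1 / q) := by
        unfold lpNorm
        gcongr with i
        exact h i
    _ = (∑ i, c i ^ q) ^ (1 / q) * t := by
        simp_rw [Real.mul_rpow (hc _) ht, ← sum_mul]
        rw [Real.mul_rpow (sum_nonneg fun _ _ => Real.rpow_nonneg (hc _) _) (Real.rpow_nonneg ht _),
          ← Real.rpow_mul ht, mul_one_div_cancel hq.ne', Real.rpow_one]

theorem norm_mulVec_apply_le {r s : ℝ} (hrs : r.HolderConjugate s) (A : Matrix (Fin a) (Fin b) ℂ)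
    (x : Fin b → ℂ) (i : Fin a) : ‖(A *ᵥ x) i‖ ≤ lpNorm r (A i) * lpNorm s x :=
  calc ‖(A *ᵥ x) i‖ ≤ ∑ k, ‖A i k‖ * ‖x k‖ := by
        simpa only [mulVec, dotProduct, norm_mul] using
          norm_sum_le univ (fun k => A i k * x k : Fin b → ℂ)
    _ ≤ lpNorm r (A i) * lpNorm s x :=
        Real.inner_le_Lp_mul_Lq_of_nonneg univ hrs (fun _ _ => norm_nonneg _)
          fun _ _ => norm_nonneg _

theorem lpNorm_mulVec_le {q r s : ℝ} (hq : 0 < q) (hrs : r.HolderConjugate s)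
    (A : Matrix (Fin a) (Fin b) ℂ) (x : Fin b → ℂ) :
    lpNorm q (A *ᵥ x) ≤ (∑ i, lpNorm r (A i) ^ q) ^ (1 / q) * lpNorm s x :=
  lpNorm_le_of_norm_le_mul hq (lpNorm_nonneg s x) (fun i => lpNorm_nonneg r (A i))
    (norm_mulVec_apply_le hrs A x)

theorem opNorm_le_rows_rpow_mul_eNorm_conj {p p' : ℝ} (hpq : p.HolderConjugate p')
    (α : Matrix (Fin a) (Fin b) ℂ) : opNorm p α ≤ (a : ℝ) ^ |1 / p - 1 / p'| * eNorm p' α := by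
  refine opNorm_le_of_lpNorm_mulVec_le (mul_nonneg (by positivity) (eNorm_nonneg p' α))
    fun x => ?_
  calc lpNorm p (α *ᵥ x) ≤ (∑ i, lpNorm p' (α i) ^ p) ^ (1 / p) * lpNorm p x :=
        lpNorm_mulVec_le hpq.pos hpq.symm α x
    _ ≤ (a : ℝ) ^ |1 / p - 1 / p'| * eNorm p' α * lpNorm p x := by
        rw [eNorm_eq_lpNorm_rows hpq.symm.ne_zero]
        gcongr
        · exact lpNorm_nonneg p x
        · simpa using Lp_le_card_rpow_abs_mul_Lq_of_nonneg univ hpq.pos hpq.symm.pos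
            fun i _ => lpNorm_nonneg p' (α i)

theorem opNorm_le_cols_rpow_mul_eNorm {p p' : ℝ} (hpq : p.HolderConjugate p')
    (β : Matrix (Fin a) (Fin b) ℂ) : opNorm p β ≤ (b : ℝ) ^ |1 / p - 1 / p'| * eNorm p β := by
  refine opNorm_le_of_lpNorm_mulVec_le (mul_nonneg (by positivity) (eNorm_nonneg p β))
    fun x => ?_
  calc lpNorm p (β *ᵥ x) ≤ eNorm p β * lpNorm p' x := by
        rw [eNorm_eq_lpNorm_rows hpq.ne_zero]
        exact lpNorm_mulVec_le hpq.pos hpq β x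
    _ ≤ eNorm p β * ((b : ℝ) ^ |1 / p - 1 / p'| * lpNorm p x) := by
        rw [abs_sub_comm]
        gcongr
        · exact eNorm_nonneg p β
        · exact lpNorm_le_card_rpow_mul_lpNorm hpq.symm.pos hpq.pos x
    _ = (b : ℝ) ^ |1 / p - 1 / p'| * eNorm p β * lpNorm p x := by ring

end MatrixNorms

theorem act_one_one {n : ℕ} (v : Matrix (Fin n) (Fin n) V) : act 1 v 1 = v := by
  ext i j
  simp [act, Matrix.one_apply, ite_smul]

theorem POpSpace.N_act_le {p p' : ℝ} (S : POpSpace p V) (hpq : p.HolderConjugate p') {n r : ℕ}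
    (α : Matrix (Fin n) (Fin r) ℂ) (w : Matrix (Fin r) (Fin r) V) (β : Matrix (Fin r) (Fin n) ℂ) :
    S.N n (act α w β) ≤
      (n : ℝ) ^ (2 * |1 / p - 1 / p'|) * (eNorm p' α * S.N r w * eNorm p β) := by
  calc S.N n (act α w β) ≤ opNorm p α * S.N r w * opNorm p β := S.Mp n r α w β
    _ ≤ ((n : ℝ) ^ |1 / p - 1 / p'| * eNorm p' α) * S.N r w *
          ((n : ℝ) ^ |1 / p - 1 / p'| * eNorm p β) := by
        have hα := opNorm_le_rows_rpow_mul_eNorm_conj hpq α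
        have hβ := opNorm_le_cols_rpow_mul_eNorm hpq β
        have hw := S.nonneg r w
        refine mul_le_mul (mul_le_mul_of_nonneg_right hα hw) hβ (opNorm_nonneg p β) ?_
        exact mul_nonneg (mul_nonneg (by positivity) (eNorm_nonneg p' α)) hw
    _ = (n : ℝ) ^ (2 * |1 / p - 1 / p'|) * (eNorm p' α * S.N r w * eNorm p β) := by
        rw [mul_comm 2, Real.rpow_mul (Nat.cast_nonneg n), Real.rpow_two]
        ring

theorem le_mul_sInf {x K : ℝ} {X : Set ℝ} (hK : 0 ≤ K) (hX : X.Nonempty)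
    (h : ∀ c ∈ X, x ≤ K * c) : x ≤ K * sInf X := by
  rw [← smul_eq_mul, ← Real.sInf_smul_of_nonneg hK]
  refine le_csInf hX.smul_set ?_
  rintro _ ⟨c, hc, rfl⟩
  exact h c hc

theorem norm_le_norm1_general (p p' : ℝ) (hp : 1 < p)
    (hconj : 1 / p + 1 / p' = 1) (S : POpSpace p V) (n : ℕ)
    (v : Matrix (Fin n) (Fin n) V) :
    S.N n v ≤ (n : ℝ) ^ (2 * |1 / p - 1 / p'|) * norm1 p' S n v ∧
      (norm1 p' S n v = 0 → v = 0) := by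
  have hpq : p.HolderConjugate p' :=
    Real.holderConjugate_iff.2 ⟨hp, by simpa only [one_div] using hconj⟩
  have hle : S.N n v ≤ (n : ℝ) ^ (2 * |1 / p - 1 / p'|) * norm1 p' S n v := by
    refine le_mul_sInf (by positivity) ⟨_, n, 1, v, 1, (act_one_one v).symm, rfl⟩ ?_
    rintro _ ⟨r, α, w, β, rfl, rfl⟩
    exact S.N_act_le hpq α w β
  refine ⟨hle, fun h0 => (S.eq_zero_iff n v).1 (le_antisymm ?_ (S.nonneg n v))⟩
  simpa [h0] using hle

/-- `‖v‖_{M_n(V)} ≤ n^{2|1/p-1/p'|} ‖v‖_{1,n}`; in particular `‖v‖_{1,n} = 0` implies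
`v = 0`. -/
theorem norm_le_norm1 (p p' : ℝ) (hp : 1 < p) (hp' : 1 < p')
    (hconj : 1 / p + 1 / p' = 1) (S : POpSpace p V) (n : ℕ)
    (v : Matrix (Fin n) (Fin n) V) :
    S.N n v ≤ (n : ℝ) ^ (2 * |1 / p - 1 / p'|) * norm1 p' S n v ∧
      (norm1 p' S n v = 0 → v = 0) :=
  norm_le_norm1_general p p' hp hconj S n v
end
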